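/- arXiv:1802.08502 — 3 statements merged into one kernel-verified Lean document; each statement's English description precedes it below -/
import Mathlib

section
/- Let X₀, R₀⁺ be real numbers, (Rᵢ⁺)_{i≥1}, (R_N⁻)_{N≥1} real sequences, S_t = X₀ + Σ_{i=0}^{t−1} Rᵢ⁺, X_N = S_N − R_N⁻, and π_N = (1/N)·Σ_{t=1}^{N} S_t − X_N. Fix N ≥ 3 and suppose π_{N−1} = 0, π_N = 0, and the martingale condition P_{N−1}·R_{N−1}⁺ = (1 − P_{N−1})·R_{N−1}⁻ holds for some P_{N−1} with 0 < P_{N−1} < 1. Then N·R_N⁻ = (N−1)·R_{N−1}⁻ / P_{N−1}. -/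
/-!
Fair pricing at size `n` says `∑_{t ≤ n} S t = n X_n`. Subtracting this identity at sizes
`N - 1` and `N` gives `N R_N⁻ = (N - 1) (R_{N-1}⁺ + R_{N-1}⁻)`, and the martingale condition
is exactly `R_{N-1}⁺ + R_{N-1}⁻ = R_{N-1}⁻ / P_{N-1}`.
-/

open Finset

theorem sum_Icc_eq_mul_of_fairPrice {S X π : ℕ → ℝ} {n : ℕ} (hn : 1 ≤ n)
    (hπ : π n = 1 / (n : ℝ) * ∑ t ∈ Icc 1 n, S t - X n) (hfair : π n = 0) :
    ∑ t ∈ Icc 1 n, S t = n * X n := by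
  have hn' : (n : ℝ) ≠ 0 := by exact_mod_cast (by omega : n ≠ 0)
  rw [hfair] at hπ
  field_simp at hπ
  linarith

theorem succ_mul_reversion_eq {Rp Rm S : ℕ → ℝ} {n : ℕ}
    (hstep : S (n + 1) = S n + Rp n)
    (hfair : ∑ t ∈ Icc 1 n, S t = n * (S n - Rm n))
    (hfair_succ : ∑ t ∈ Icc 1 (n + 1), S t = ((n + 1 : ℕ) : ℝ) * (S (n + 1) - Rm (n + 1))) :
    ((n : ℝ) + 1) * Rm (n + 1) = n * (Rp n + Rm n) := by
  rw [sum_Icc_succ_top (by omega), hfair, hstep] at hfair_succ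
  push_cast at hfair_succ
  linarith

theorem add_eq_div_of_martingale {p a b : ℝ} (hp : p ≠ 0) (hmart : p * a = (1 - p) * b) :
    a + b = b / p := by
  rw [eq_div_iff hp]
  linarith

theorem stmt_2_general (X₀ : ℝ) (Rp Rm S X π P : ℕ → ℝ)
    (hS : ∀ t : ℕ, 1 ≤ t → S t = X₀ + ∑ i ∈ Finset.range t, Rp i)
    (hX : ∀ N : ℕ, 1 ≤ N → X N = S N - Rm N)
    (hπ : ∀ N : ℕ, 1 ≤ N →
      π N = (1 / (N : ℝ)) * (∑ t ∈ Finset.Icc 1 N, S t) - X N)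
    (N : ℕ) (hN : 3 ≤ N)
    (hπN1 : π (N - 1) = 0) (hπN : π N = 0)
    (hPpos : 0 < P (N - 1))
    (hmart : P (N - 1) * Rp (N - 1) = (1 - P (N - 1)) * Rm (N - 1)) :
    (N : ℝ) * Rm N = ((N : ℝ) - 1) * Rm (N - 1) / P (N - 1) := by
  obtain ⟨n, rfl⟩ : ∃ n, N = n + 1 := ⟨N - 1, by omega⟩
  simp only [Nat.add_sub_cancel] at hπN1 hPpos hmart ⊢
  have hn : 1 ≤ n := by omega
  have hstep : S (n + 1) = S n + Rp n := by
    rw [hS n hn, hS (n + 1) (by omega), sum_range_succ, add_assoc]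
  have hfair := sum_Icc_eq_mul_of_fairPrice hn (hπ n hn) hπN1
  have hfair_succ := sum_Icc_eq_mul_of_fairPrice (by omega) (hπ (n + 1) (by omega)) hπN
  rw [hX n hn] at hfair
  rw [hX (n + 1) (by omega)] at hfair_succ
  have hrec := succ_mul_reversion_eq hstep hfair hfair_succ
  rw [add_eq_div_of_martingale hPpos.ne' hmart] at hrec
  push_cast
  rw [hrec, add_sub_cancel_right, mul_div_assoc]

/-- Combining the fair-pricing conditions `π_{N−1} = 0`, `π_N = 0`
with the martingale condition at step `N − 1` yields the recursion
`N·R_N⁻ = (N−1)·R_{N−1}⁻ / P_{N−1}`. -/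
theorem stmt_2 (X₀ : ℝ) (Rp Rm S X π P : ℕ → ℝ)
    (hS : ∀ t : ℕ, 1 ≤ t → S t = X₀ + ∑ i ∈ Finset.range t, Rp i)
    (hX : ∀ N : ℕ, 1 ≤ N → X N = S N - Rm N)
    (hπ : ∀ N : ℕ, 1 ≤ N →
      π N = (1 / (N : ℝ)) * (∑ t ∈ Finset.Icc 1 N, S t) - X N)
    (N : ℕ) (hN : 3 ≤ N)
    (hπN1 : π (N - 1) = 0) (hπN : π N = 0)
    (hPpos : 0 < P (N - 1)) (hPlt : P (N - 1) < 1)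
    (hmart : P (N - 1) * Rp (N - 1) = (1 - P (N - 1)) * Rm (N - 1)) :
    (N : ℝ) * Rm N = ((N : ℝ) - 1) * Rm (N - 1) / P (N - 1) :=
  stmt_2_general X₀ Rp Rm S X π P hS hX hπ N hN hπN1 hπN hPpos hmart
end

section
/- Let β > 0 and define Z(a) = Σ_{n=0}^{∞} (n + a)^{−(1+β)} for real a ≥ 1, and P_t = Z(t+1)/Z(t). Then the error 1 − P_t − β/t is O(1/t²) as t → ∞; that is, there exist C > 0 and T such that |1 − Z(t+1)/Z(t) − β/t| ≤ C/t² for all integers t ≥ T. -/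
/-!
By the mean value theorem, `x^{-β} - (x+1)^{-β}` lies between `β (x+1)^{-(1+β)}` and
`β x^{-(1+β)}`. Telescoping over `x, x+1, x+2, …` gives `β Z(x+1) ≤ x^{-β} ≤ β Z(x)`.
Since `Z(x) = x^{-(1+β)} + Z(x+1)`, we have `1 - Z(x+1)/Z(x) = x^{-(1+β)}/Z(x)`, and the two
bounds pin this ratio between `β/x - β²/x²` and `β/x`.
-/

open Real Filter Topology Set

noncomputable def realHurwitzZeta (s a : ℝ) : ℝ := ∑' n : ℕ, ((n : ℝ) + a) ^ (-s)

lemma hasSum_sub_succ_of_antitone {f : ℕ → ℝ} (hf : Antitone f)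
    (h0 : Tendsto f atTop (𝓝 0)) : HasSum (fun n => f n - f (n + 1)) (f 0) := by
  refine (hasSum_iff_tendsto_nat_of_nonneg (fun n => sub_nonneg.2 (hf n.le_succ)) _).2 ?_
  simpa only [Finset.sum_range_sub', sub_zero] using (tendsto_const_nhds (x := f 0)).sub h0

lemma summable_nat_add_rpow_neg {s a : ℝ} (hs : 1 < s) (ha : 0 < a) :
    Summable fun n : ℕ => ((n : ℝ) + a) ^ (-s) := by
  refine ((Real.summable_one_div_nat_add_rpow a s).2 hs).congr fun n => ?_
  rw [abs_of_pos (by positivity), one_div, rpow_neg (by positivity)]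

lemma realHurwitzZeta_eq_rpow_add {s a : ℝ} (hs : 1 < s) (ha : 0 < a) :
    realHurwitzZeta s a = a ^ (-s) + realHurwitzZeta s (a + 1) := by
  rw [realHurwitzZeta, (summable_nat_add_rpow_neg hs ha).tsum_eq_zero_add, realHurwitzZeta]
  push_cast
  simp only [zero_add, add_assoc, add_comm 1 a]

lemma exists_rpow_neg_sub_rpow_neg_add_one (β : ℝ) {x : ℝ} (hx : 0 < x) :
    ∃ c ∈ Ioo x (x + 1), x ^ (-β) - (x + 1) ^ (-β) = β * c ^ (-(1 + β)) := by
  have hne : ∀ u ∈ Icc x (x + 1), u ≠ 0 := fun u hu => (hx.trans_le hu.1).ne'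
  obtain ⟨c, hc, hslope⟩ := exists_hasDerivAt_eq_slope (fun u => u ^ (-β))
    (fun u => -β * u ^ (-β - 1)) (lt_add_one x)
    (fun u hu => (continuousAt_rpow_const _ _ (Or.inl (hne u hu))).continuousWithinAt)
    (fun u hu => hasDerivAt_rpow_const (Or.inl (hne u (Ioo_subset_Icc_self hu))))
  refine ⟨c, hc, ?_⟩
  rw [add_sub_cancel_left, div_one, show -β - 1 = -(1 + β) by ring] at hslope
  linarith

lemma rpow_neg_sub_rpow_neg_add_one_mem_Icc {β x : ℝ} (hβ : 0 ≤ β) (hx : 0 < x) :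
    x ^ (-β) - (x + 1) ^ (-β) ∈ Icc (β * (x + 1) ^ (-(1 + β))) (β * x ^ (-(1 + β))) := by
  obtain ⟨c, hc, hdiff⟩ := exists_rpow_neg_sub_rpow_neg_add_one β hx
  have hexp : -(1 + β) ≤ 0 := by linarith
  rw [hdiff]
  exact ⟨mul_le_mul_of_nonneg_left (rpow_le_rpow_of_nonpos (hx.trans hc.1) hc.2.le hexp) hβ,
    mul_le_mul_of_nonneg_left (rpow_le_rpow_of_nonpos hx hc.1.le hexp) hβ⟩

lemma hasSum_nat_add_rpow_neg_sub {β x : ℝ} (hβ : 0 < β) (hx : 0 < x) :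
    HasSum (fun n : ℕ => ((n : ℝ) + x) ^ (-β) - ((n : ℝ) + x + 1) ^ (-β)) (x ^ (-β)) := by
  have hanti : Antitone fun n : ℕ => ((n : ℝ) + x) ^ (-β) := fun m n hmn =>
    rpow_le_rpow_of_nonpos (by positivity) (by gcongr) (by linarith)
  have hlim : Tendsto (fun n : ℕ => ((n : ℝ) + x) ^ (-β)) atTop (𝓝 0) :=
    (tendsto_rpow_neg_atTop hβ).comp (tendsto_atTop_add_const_right _ x tendsto_natCast_atTop_atTop)
  simpa [add_right_comm] using hasSum_sub_succ_of_antitone hanti hlim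

lemma rpow_neg_le_mul_realHurwitzZeta {β x : ℝ} (hβ : 0 < β) (hx : 0 < x) :
    x ^ (-β) ≤ β * realHurwitzZeta (1 + β) x :=
  hasSum_le (fun n => (rpow_neg_sub_rpow_neg_add_one_mem_Icc hβ.le (by positivity)).2)
    (hasSum_nat_add_rpow_neg_sub hβ hx)
    ((summable_nat_add_rpow_neg (by linarith) hx).hasSum.mul_left β)

lemma mul_realHurwitzZeta_add_one_le {β x : ℝ} (hβ : 0 < β) (hx : 0 < x) :
    β * realHurwitzZeta (1 + β) (x + 1) ≤ x ^ (-β) := by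
  refine hasSum_le (fun n => ?_)
    ((summable_nat_add_rpow_neg (by linarith) (by positivity)).hasSum.mul_left β)
    (hasSum_nat_add_rpow_neg_sub hβ hx)
  rw [← add_assoc]
  exact (rpow_neg_sub_rpow_neg_add_one_mem_Icc hβ.le (by positivity)).1

lemma abs_one_sub_realHurwitzZeta_div_sub_le {β x : ℝ} (hβ : 0 < β) (hx : 0 < x) :
    |1 - realHurwitzZeta (1 + β) (x + 1) / realHurwitzZeta (1 + β) x - β / x| ≤
      β ^ 2 / x ^ 2 := by
  have hrec := realHurwitzZeta_eq_rpow_add (s := 1 + β) (by linarith) hx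
  set Z := realHurwitzZeta (1 + β) x
  set Z' := realHurwitzZeta (1 + β) (x + 1)
  set D := x ^ (-(1 + β))
  replace hrec : Z' = Z - D := by linarith
  have hxD : x ^ (-β) = x * D := by
    rw [show -β = 1 + -(1 + β) by ring, rpow_add hx, rpow_one]
  have hlow : x * D ≤ β * Z := hxD ▸ rpow_neg_le_mul_realHurwitzZeta hβ hx
  have hup : β * Z' ≤ x * D := hxD ▸ mul_realHurwitzZeta_add_one_le hβ hx
  have hZ : 0 < Z :=
    pos_of_mul_pos_right ((mul_pos hx (rpow_pos_of_pos hx _)).trans_le hlow) hβ.le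
  have herr : 1 - Z' / Z - β / x = -((β * Z - x * D) / (x * Z)) := by
    rw [hrec]
    field_simp
    ring
  rw [herr, abs_neg, abs_of_nonneg (div_nonneg (by linarith) (by positivity)),
    div_le_div_iff₀ (by positivity) (by positivity)]
  calc (β * Z - x * D) * x ^ 2 ≤ β * D * x ^ 2 := by
        gcongr
        rw [hrec] at hup
        linarith
    _ = β * x * (x * D) := by ring
    _ ≤ β * x * (β * Z) := by gcongr
    _ = β ^ 2 * (x * Z) := by ring

/-- With `Z a = ∑_{n≥0} (n+a)^{−(1+β)}` and `P_t = Z(t+1)/Z(t)`,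
the error `1 − P_t − β/t` is `O(1/t²)` as `t → ∞`: there exist `C > 0` and `T`
such that `|1 − Z(t+1)/Z(t) − β/t| ≤ C/t²` for all integers `t ≥ T`. -/
theorem stmt_11 (β : ℝ) (hβ : 0 < β)
    (Z : ℝ → ℝ)
    (hZ : ∀ a : ℝ, 1 ≤ a → Z a = ∑' n : ℕ, ((n : ℝ) + a) ^ (-(1 + β))) :
    ∃ C : ℝ, 0 < C ∧ ∃ T : ℕ, ∀ t : ℕ, T ≤ t →
      |1 - Z ((t : ℝ) + 1) / Z t - β / t| ≤ C / (t : ℝ) ^ 2 := by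
  refine ⟨β ^ 2, by positivity, 1, fun t ht => ?_⟩
  have ht1 : (1 : ℝ) ≤ t := by exact_mod_cast ht
  rw [hZ _ ht1, hZ _ (by linarith)]
  exact abs_one_sub_realHurwitzZeta_div_sub_le hβ (by linarith)
end

section
/- Let β > 1, Z(a) = Σ_{n=0}^{∞} (n + a)^{−(1+β)} for real a ≥ 1, R₀⁺ ∈ ℝ, R₁⁺ > 0, for k ≥ 2 let R_k⁺ = (1/k^{2+β})·Z(1)/(Z(k)·Z(k+1))·R₁⁺, and set 𝓘_t = R₀⁺ + R₁⁺ + Σ_{k=2}^{t−1} R_k⁺ and I_N = (1/N)·Σ_{t=1}^{N} 𝓘_t. Then lim_{N→∞} I_N / N^{β−1} = β·Z(1)·R₁⁺ / (β − 1). -/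
/-!
Comparing the Hurwitz tail `Z a` with `∫_a^∞ x^(-(1+β)) dx = a^(-β)/β` shows `Z a ~ a^(-β)/β`,
hence `R_k⁺ ~ β² Z(1) R₁⁺ k^(β-2)`. Summing a sequence `~ c k^p` (`p > -1`) multiplies it by
`n/(p+1)` asymptotically (Stolz–Cesàro against the telescoping increments of `n^(p+1)`); applied
once this gives `𝓘_t ~ β² Z(1) R₁⁺ t^(β-1)/(β-1)`, and applied again, after dividing by `N`,
the limit of `I_N / N^(β-1)`.
-/

open Filter Finset Real Topology

section HurwitzTail

open Set MeasureTheory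

variable {β a : ℝ}

lemma hasDerivAt_neg_add_rpow_neg_div (hβ : β ≠ 0) {x : ℝ} (hx : 0 < x + a) :
    HasDerivAt (fun x => -(x + a) ^ (-β) / β) ((x + a) ^ (-(1 + β))) x := by
  refine (((hasDerivAt_id x).add_const a).rpow_const (p := -β) (Or.inl hx.ne')).neg.div_const β
    |>.congr_deriv ?_
  rw [id, show -β - 1 = -(1 + β) by ring]
  field_simp

lemma integrableOn_and_integral_Ioi_add_rpow (hβ : 0 < β) (ha : 0 < a) :
    IntegrableOn (fun x => (x + a) ^ (-(1 + β))) (Ioi 0) ∧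
      ∫ x in Ioi 0, (x + a) ^ (-(1 + β)) = a ^ (-β) / β := by
  have hderiv : ∀ x ∈ Ici (0 : ℝ), HasDerivAt (fun x => -(x + a) ^ (-β) / β)
      ((x + a) ^ (-(1 + β))) x := fun x hx =>
    hasDerivAt_neg_add_rpow_neg_div hβ.ne' (by linarith [hx.out])
  have hnonneg : ∀ x ∈ Ioi (0 : ℝ), 0 ≤ (x + a) ^ (-(1 + β)) := fun x hx =>
    rpow_nonneg (by linarith [hx.out]) _
  have hlim : Tendsto (fun x => -(x + a) ^ (-β) / β) atTop (𝓝 0) := by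
    simpa using ((tendsto_rpow_neg_atTop hβ).comp
      (tendsto_atTop_add_const_right _ a tendsto_id)).neg.div_const β
  refine ⟨integrableOn_Ioi_deriv_of_nonneg' hderiv hnonneg hlim, ?_⟩
  rw [integral_Ioi_of_hasDerivAt_of_nonneg' hderiv hnonneg hlim]
  simp [neg_div]

lemma tsum_nat_add_rpow_bounds (hβ : 0 < β) (ha : 0 < a) :
    a ^ (-β) / β ≤ ∑' n : ℕ, ((n : ℝ) + a) ^ (-(1 + β)) ∧
      ∑' n : ℕ, ((n : ℝ) + a) ^ (-(1 + β)) ≤ a ^ (-(1 + β)) + a ^ (-β) / β := by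
  obtain ⟨hint, hval⟩ := integrableOn_and_integral_Ioi_add_rpow hβ ha
  have hanti : AntitoneOn (fun x : ℝ => (x + a) ^ (-(1 + β))) (Ici 0) := fun x hx y _ hxy =>
    rpow_le_rpow_of_nonpos (by linarith [hx.out]) (by linarith) (by linarith)
  have hnonneg : ∀ x ∈ Ioi (0 : ℝ), 0 ≤ (x + a) ^ (-(1 + β)) := fun x hx =>
    rpow_nonneg (by linarith [hx.out]) _
  have hsum := hanti.summable_of_integrableOn_Ioi_zero hint hnonneg
  constructor
  · simpa only [hval] using hanti.integral_le_tsum hsum hnonneg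
  · simpa only [hval, Nat.cast_zero, zero_add] using hanti.tsum_le_integral hint hnonneg

lemma tendsto_tsum_nat_add_rpow_div_rpow (hβ : 0 < β) :
    Tendsto (fun a : ℝ => (∑' n : ℕ, ((n : ℝ) + a) ^ (-(1 + β))) / a ^ (-β)) atTop
      (𝓝 β⁻¹) := by
  have hupper : Tendsto (fun a : ℝ => a⁻¹ + β⁻¹) atTop (𝓝 β⁻¹) := by
    simpa using tendsto_inv_atTop_zero.add_const β⁻¹
  refine tendsto_of_tendsto_of_tendsto_of_le_of_le' tendsto_const_nhds hupper ?_ ?_ <;>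
    filter_upwards [eventually_gt_atTop 0] with a ha
  all_goals
    have hpos : 0 < a ^ (-β) := rpow_pos_of_pos ha _
    obtain ⟨hlow, hup⟩ := tsum_nat_add_rpow_bounds hβ ha
  · rw [le_div_iff₀ hpos]
    calc β⁻¹ * a ^ (-β) = a ^ (-β) / β := by ring
      _ ≤ _ := hlow
  · rw [div_le_iff₀ hpos]
    calc _ ≤ a ^ (-(1 + β)) + a ^ (-β) / β := hup
      _ = (a⁻¹ + β⁻¹) * a ^ (-β) := by
        rw [neg_add, rpow_add ha, rpow_neg_one]
        ring

lemma tendsto_div_rpow_of_eq_tsum_nat_add_rpow {Z : ℝ → ℝ} (hβ : 0 < β)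
    (hZ : ∀ a : ℝ, 1 ≤ a → Z a = ∑' n : ℕ, ((n : ℝ) + a) ^ (-(1 + β))) :
    Tendsto (fun k : ℕ => Z k / (k : ℝ) ^ (-β)) atTop (𝓝 β⁻¹) := by
  refine ((tendsto_tsum_nat_add_rpow_div_rpow hβ).comp tendsto_natCast_atTop_atTop).congr' ?_
  filter_upwards [eventually_ge_atTop 1] with k hk
  rw [Function.comp_apply, hZ k (by exact_mod_cast hk)]

end HurwitzTail

lemma tendsto_add_one_rpow_sub_rpow_div (q : ℝ) :
    Tendsto (fun x : ℝ => ((x + 1) ^ q - x ^ q) / x ^ (q - 1)) atTop (𝓝 q) := by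
  have hderiv : HasDerivAt (fun t : ℝ => t ^ q) q 1 := by
    simpa using hasDerivAt_rpow_const (x := 1) (p := q) (Or.inl one_ne_zero)
  have hslope := (hasDerivAt_iff_tendsto_slope_zero.1 hderiv).comp
    (tendsto_inv_atTop_nhdsGT_zero.mono_right (nhdsWithin_mono _ fun _ hx => ne_of_gt hx))
  refine hslope.congr' ?_
  filter_upwards [eventually_gt_atTop 0] with x hx
  simp only [Function.comp_apply, smul_eq_mul, inv_inv, one_rpow]
  rw [rpow_sub_one hx.ne', show 1 + x⁻¹ = (x + 1) / x by field_simp, div_rpow (by linarith) hx.le]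
  field_simp

lemma tendsto_sum_range_div_sum_range {a g : ℕ → ℝ} {c : ℝ} (hg : ∀ k, 0 ≤ g k)
    (hg_ne : ∀ᶠ k in atTop, g k ≠ 0)
    (hG : Tendsto (fun n => ∑ k ∈ range n, g k) atTop atTop)
    (h : Tendsto (fun k => a k / g k) atTop (𝓝 c)) :
    Tendsto (fun n => (∑ k ∈ range n, a k) / ∑ k ∈ range n, g k) atTop (𝓝 c) := by
  have hlittle : (fun k => a k - c * g k) =o[atTop] g := by
    rw [Asymptotics.isLittleO_iff_tendsto' (hg_ne.mono fun k hk h0 => absurd h0 hk)]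
    refine (by simpa using h.sub_const c : Tendsto (fun k => a k / g k - c) atTop (𝓝 0)).congr' ?_
    filter_upwards [hg_ne] with k hk
    field_simp
  have hsum := ((hlittle.sum_range hg hG).tendsto_div_nhds_zero).add_const c
  rw [zero_add] at hsum
  refine hsum.congr' ?_
  filter_upwards [hG.eventually_gt_atTop 0] with n hn
  rw [sum_sub_distrib, ← mul_sum]
  field_simp
  ring

lemma tendsto_sum_range_div_rpow {a : ℕ → ℝ} {p c : ℝ} (hp : -1 < p)
    (h : Tendsto (fun k => a k / (k : ℝ) ^ p) atTop (𝓝 c)) :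
    Tendsto (fun n => (∑ k ∈ range n, a k) / (n : ℝ) ^ (p + 1)) atTop (𝓝 (c / (p + 1))) := by
  set g : ℕ → ℝ := fun k => ((k : ℝ) + 1) ^ (p + 1) - (k : ℝ) ^ (p + 1)
  have hp1 : 0 < p + 1 := by linarith
  have hg_pos : ∀ k, 0 < g k := fun k =>
    sub_pos.2 (rpow_lt_rpow (Nat.cast_nonneg k) (lt_add_one _) hp1)
  have hG : ∀ n, ∑ k ∈ range n, g k = (n : ℝ) ^ (p + 1) := fun n => by
    simpa [g, zero_rpow hp1.ne'] using sum_range_sub (fun k => (k : ℝ) ^ (p + 1)) n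
  have hratio : Tendsto (fun k : ℕ => (k : ℝ) ^ p / g k) atTop (𝓝 (p + 1)⁻¹) := by
    refine (((tendsto_add_one_rpow_sub_rpow_div (p + 1)).comp
      tendsto_natCast_atTop_atTop).inv₀ hp1.ne').congr fun k => ?_
    simp [g]
  have hG_top : Tendsto (fun n => ∑ k ∈ range n, g k) atTop atTop := by
    simp only [hG]
    exact (tendsto_rpow_atTop hp1).comp tendsto_natCast_atTop_atTop
  have hag : Tendsto (fun k => a k / g k) atTop (𝓝 (c * (p + 1)⁻¹)) := by
    refine (h.mul hratio).congr' ?_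
    filter_upwards [eventually_gt_atTop 0] with k hk
    field_simp
  simpa only [hG, div_eq_mul_inv] using tendsto_sum_range_div_sum_range (fun k => (hg_pos k).le)
    (Eventually.of_forall fun k => (hg_pos k).ne') hG_top hag

lemma tendsto_div_rpow_comp_add_one {u : ℕ → ℝ} {q L : ℝ}
    (h : Tendsto (fun n => u n / (n : ℝ) ^ q) atTop (𝓝 L)) :
    Tendsto (fun n => u (n + 1) / (n : ℝ) ^ q) atTop (𝓝 L) := by
  have hratio : Tendsto (fun n : ℕ => (((n : ℝ) + 1) / n) ^ q) atTop (𝓝 1) := by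
    have : Tendsto (fun n : ℕ => ((n : ℝ) + 1) / n) atTop (𝓝 1) := by
      simpa using (tendsto_natCast_div_add_atTop (1 : ℝ)).inv₀ one_ne_zero
    simpa using this.rpow_const (Or.inl one_ne_zero)
  have hshift := (h.comp (tendsto_add_atTop_nat 1)).mul hratio
  rw [mul_one] at hshift
  refine hshift.congr' ?_
  filter_upwards [eventually_gt_atTop 0] with n hn
  have hn : (0 : ℝ) < n := Nat.cast_pos.2 hn
  rw [Function.comp_apply, div_rpow (by linarith) hn.le, Nat.cast_succ]
  field_simp

lemma tendsto_const_add_div_rpow {u : ℕ → ℝ} {q L : ℝ} (C : ℝ) (hq : 0 < q)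
    (h : Tendsto (fun n => u n / (n : ℝ) ^ q) atTop (𝓝 L)) :
    Tendsto (fun n => (C + u n) / (n : ℝ) ^ q) atTop (𝓝 L) := by
  have hC : Tendsto (fun n : ℕ => C / (n : ℝ) ^ q) atTop (𝓝 0) :=
    tendsto_const_nhds.div_atTop ((tendsto_rpow_atTop hq).comp tendsto_natCast_atTop_atTop)
  simpa [add_div] using hC.add h

theorem stmt_17_general (β : ℝ) (hβ : 1 < β)
    (Z : ℝ → ℝ)
    (hZ : ∀ a : ℝ, 1 ≤ a → Z a = ∑' n : ℕ, ((n : ℝ) + a) ^ (-(1 + β)))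
    (R₀ R₁ : ℝ) (Rp : ℕ → ℝ)
    (hRp : ∀ k : ℕ, 2 ≤ k →
      Rp k = (1 / (k : ℝ) ^ (2 + β)) * (Z 1 / (Z k * Z ((k : ℝ) + 1))) * R₁)
    (I : ℕ → ℝ)
    (hI : ∀ t : ℕ, I t = R₀ + R₁ + ∑ k ∈ Finset.Icc 2 (t - 1), Rp k)
    (J : ℕ → ℝ)
    (hJ : ∀ N : ℕ, 1 ≤ N → J N = (1 / (N : ℝ)) * ∑ t ∈ Finset.Icc 1 N, I t) :
    Filter.Tendsto (fun N : ℕ => J N / (N : ℝ) ^ (β - 1))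
      Filter.atTop (nhds (β * Z 1 * R₁ / (β - 1))) := by
  have hβ0 : 0 < β := by linarith
  have hZk := tendsto_div_rpow_of_eq_tsum_nat_add_rpow hβ0 hZ
  have hZk1 : Tendsto (fun k : ℕ => Z ((k : ℝ) + 1) / (k : ℝ) ^ (-β)) atTop (𝓝 β⁻¹) := by
    simpa only [Nat.cast_succ] using tendsto_div_rpow_comp_add_one hZk
  have hR : Tendsto (fun k : ℕ => Rp k / (k : ℝ) ^ (β - 2)) atTop
      (𝓝 (Z 1 * R₁ / (β⁻¹ * β⁻¹))) := by
    refine (tendsto_const_nhds.div (hZk.mul hZk1) (by positivity)).congr' ?_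
    filter_upwards [eventually_ge_atTop 2] with k hk
    have hk0 : (0 : ℝ) < k := by exact_mod_cast (by omega : 0 < k)
    rw [Pi.div_apply, hRp k hk, rpow_neg hk0.le, rpow_add hk0, rpow_sub hk0, rpow_two]
    field_simp
  have hIt : Tendsto (fun t : ℕ => I t / (t : ℝ) ^ (β - 1)) atTop
      (𝓝 (Z 1 * R₁ / (β⁻¹ * β⁻¹) / (β - 1))) := by
    have hsum := tendsto_sum_range_div_rpow (by linarith : -1 < β - 2) hR
    rw [show β - 2 + 1 = β - 1 by ring] at hsum
    refine (tendsto_const_add_div_rpow (R₀ + R₁ - Rp 0 - Rp 1) (by linarith) hsum).congr' ?_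
    filter_upwards [eventually_ge_atTop 2] with t ht
    rw [hI t, ← sum_range_add_sum_Ico _ ht, show Finset.Icc 2 (t - 1) = Finset.Ico 2 t by grind]
    simp only [sum_range_succ, sum_range_zero]
    ring
  have hmean := tendsto_sum_range_div_rpow (by linarith : -1 < β - 1)
    (tendsto_div_rpow_comp_add_one hIt)
  rw [show β - 1 + 1 = β by ring] at hmean
  convert hmean.congr' ?_ using 2
  · field_simp
  · filter_upwards [eventually_ge_atTop 1] with N hN
    have hN0 : (0 : ℝ) < N := by exact_mod_cast hN
    rw [hJ N hN, show Finset.Icc 1 N = Finset.Ico 1 (N + 1) by grind, sum_Ico_eq_sum_range,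
      rpow_sub_one hN0.ne']
    simp only [add_tsub_cancel_right, add_comm 1]
    field_simp

/-- For `β > 1`, the permanent impact
`I_N = (1/N)·∑_{t=1}^N 𝓘_t`, where `𝓘_t = R₀⁺ + R₁⁺ + ∑_{k=2}^{t−1} R_k⁺` and
`R_k⁺ = (1/k^{2+β})·Z(1)/(Z(k)·Z(k+1))·R₁⁺`, satisfies
`lim_{N→∞} I_N / N^{β−1} = β·Z(1)·R₁⁺/(β − 1)`. -/
theorem stmt_17 (β : ℝ) (hβ : 1 < β)
    (Z : ℝ → ℝ)
    (hZ : ∀ a : ℝ, 1 ≤ a → Z a = ∑' n : ℕ, ((n : ℝ) + a) ^ (-(1 + β)))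
    (R₀ R₁ : ℝ) (hR₁ : 0 < R₁) (Rp : ℕ → ℝ)
    (hRp : ∀ k : ℕ, 2 ≤ k →
      Rp k = (1 / (k : ℝ) ^ (2 + β)) * (Z 1 / (Z k * Z ((k : ℝ) + 1))) * R₁)
    (I : ℕ → ℝ)
    (hI : ∀ t : ℕ, I t = R₀ + R₁ + ∑ k ∈ Finset.Icc 2 (t - 1), Rp k)
    (J : ℕ → ℝ)
    (hJ : ∀ N : ℕ, 1 ≤ N → J N = (1 / (N : ℝ)) * ∑ t ∈ Finset.Icc 1 N, I t) :
    Filter.Tendsto (fun N : ℕ => J N / (N : ℝ) ^ (β - 1))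
      Filter.atTop (nhds (β * Z 1 * R₁ / (β - 1))) :=
  stmt_17_general β hβ Z hZ R₀ R₁ Rp hRp I hI J hJ
end
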